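/- arXiv:2401.00140 — 2 statements merged into one kernel-verified Lean document; each statement's English description precedes it below -/
import Mathlib

section
/- Suppose J : (0,∞) → [0,∞) satisfies J(0+) = 0, J is bounded on bounded intervals, and J(θ) ≤ E[J(θ e^{−α̃ X̃})] for all θ > 0, where X̃ ≥ 0 is a random variable with E[X̃] > 0 and α̃ > 0. Then J ≡ 0 on (0,∞). -/
open MeasureTheory Set Filter

/-- If `J : (0,∞) → [0,∞)` has `J(0+) = 0`, is bounded on bounded intervals, and satisfies
`J(θ) ≤ E[J(θ e^{−α̃ X̃})]` for all `θ > 0` with `X̃ ≥ 0`, `E[X̃] > 0`, `α̃ > 0`,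
then `J ≡ 0` on `(0,∞)`. -/
theorem stmt8 {Ω : Type*} [MeasurableSpace Ω] (P : Measure Ω) [IsProbabilityMeasure P]
    (J : ℝ → ℝ) (hJ_meas : Measurable J) (hJ_nonneg : ∀ θ > (0:ℝ), 0 ≤ J θ)
    (hJ_lim : Tendsto J (nhdsWithin 0 (Set.Ioi 0)) (nhds 0))
    (hJ_bdd : ∀ b > (0:ℝ), BddAbove (J '' Set.Ioc 0 b))
    (X : Ω → ℝ) (hX_meas : Measurable X) (hX_nonneg : ∀ ω, 0 ≤ X ω)
    (hX_mean : 0 < ∫ ω, X ω ∂P) (a : ℝ) (ha : 0 < a)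
    (hrec : ∀ θ > (0:ℝ), J θ ≤ ∫ ω, J (θ * Real.exp (-(a * X ω))) ∂P) :
    ∀ θ > (0:ℝ), J θ = 0 := by
  -- Find δ > 0 with P {X ≥ δ} > 0
  obtain ⟨δ, hδ, hq⟩ : ∃ δ > (0:ℝ), 0 < P {ω | δ ≤ X ω} := by
    by_contra h
    push_neg at h
    have hnull : ∀ n : ℕ, P {ω | (1:ℝ)/(n+1) ≤ X ω} = 0 := fun n =>
      le_antisymm (h (1/(n+1)) (by positivity)) zero_le
    have hX0 : X =ᵐ[P] (fun _ => 0) := by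
      rw [Filter.eventuallyEq_iff_exists_mem]
      refine ⟨{ω | X ω = 0}, ?_, fun ω hω => hω⟩
      rw [mem_ae_iff]
      refine measure_mono_null ?_ (measure_iUnion_null hnull)
      intro ω hω
      have hpos : 0 < X ω := lt_of_le_of_ne (hX_nonneg ω) (Ne.symm hω)
      obtain ⟨n, hn⟩ := exists_nat_one_div_lt hpos
      exact mem_iUnion.2 ⟨n, hn.le⟩
    rw [integral_congr_ae hX0, integral_zero] at hX_mean
    exact lt_irrefl 0 hX_mean
  set S : Set Ω := {ω | δ ≤ X ω} with hSdef
  have hS : MeasurableSet S := measurableSet_le measurable_const hX_meas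
  set q : ℝ := (P S).toReal with hqdef
  have hqpos : 0 < q := ENNReal.toReal_pos hq.ne' (measure_ne_top _ _)
  set g : ℝ → ℝ := fun b => sSup (J '' Ioc 0 b) with hgdef
  have hne : ∀ b > (0:ℝ), (J '' Ioc 0 b).Nonempty :=
    fun b hb => ⟨J b, ⟨b, ⟨hb, le_refl b⟩, rfl⟩⟩
  have hle : ∀ b > (0:ℝ), ∀ t ∈ Ioc 0 b, J t ≤ g b :=
    fun b hb t ht => le_csSup (hJ_bdd b hb) ⟨t, ht, rfl⟩
  set r : ℝ := Real.exp (-(a * δ)) with hrdef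
  have hr0 : 0 < r := Real.exp_pos _
  have hr1 : r < 1 := Real.exp_lt_one_iff.2 (by nlinarith)
  -- key step: g θ ≤ g (θ * r)
  have key : ∀ θ > (0:ℝ), g θ ≤ g (θ * r) := by
    intro θ hθ
    set c : ℝ := g θ - g (θ * r) with hcdef
    have hbound : ∀ t ∈ Ioc 0 θ, J t ≤ g θ - c * q := by
      intro t ht
      refine (hrec t ht.1).trans ?_
      set f : Ω → ℝ := fun ω => J (t * Real.exp (-(a * X ω))) with hfdef
      have hfmeas : Measurable f :=
        hJ_meas.comp (measurable_const.mul
          (Real.measurable_exp.comp (hX_meas.const_mul a).neg))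
      have hfmem : ∀ ω, t * Real.exp (-(a * X ω)) ∈ Ioc 0 θ := by
        intro ω
        constructor
        · exact mul_pos ht.1 (Real.exp_pos _)
        · calc t * Real.exp (-(a * X ω)) ≤ t * 1 := by
                apply mul_le_mul_of_nonneg_left _ ht.1.le
                apply Real.exp_le_one_iff.2
                have := hX_nonneg ω
                nlinarith
          _ = t := mul_one t
          _ ≤ θ := ht.2
      have hf_nonneg : ∀ ω, 0 ≤ f ω := fun ω => hJ_nonneg _ (hfmem ω).1
      have hf_le : ∀ ω, f ω ≤ g θ := fun ω => hle θ hθ _ (hfmem ω)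
      have hfint : Integrable f P := by
        refine Integrable.mono' (integrable_const (g θ)) hfmeas.aestronglyMeasurable ?_
        filter_upwards with ω
        rw [Real.norm_eq_abs, abs_of_nonneg (hf_nonneg ω)]
        exact hf_le ω
      set B : Ω → ℝ := fun ω => g θ - S.indicator (fun _ => c) ω with hBdef
      have hBint : Integrable B P :=
        (integrable_const _).sub ((integrable_const c).indicator hS)
      have hfB : ∀ ω, f ω ≤ B ω := by
        intro ω
        by_cases hω : ω ∈ S
        · have hXδ : δ ≤ X ω := hω
          have h1 : t * Real.exp (-(a * X ω)) ≤ θ * r := by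
            apply mul_le_mul ht.2 _ (Real.exp_pos _).le hθ.le
            apply Real.exp_le_exp.2
            nlinarith
          have h2 : f ω ≤ g (θ * r) :=
            hle (θ * r) (by positivity) _ ⟨(hfmem ω).1, h1⟩
          have hB : B ω = g (θ * r) := by
            simp [hBdef, Set.indicator_of_mem hω, hcdef]
          rw [hB]; exact h2
        · have hB : B ω = g θ := by
            simp [hBdef, Set.indicator_of_notMem hω]
          rw [hB]; exact hf_le ω
      calc ∫ ω, f ω ∂P ≤ ∫ ω, B ω ∂P := integral_mono hfint hBint hfB
        _ = g θ - c * q := by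
            rw [hBdef]
            rw [integral_sub (integrable_const _) ((integrable_const c).indicator hS),
              integral_const, integral_indicator_const _ hS]
            simp [hqdef, smul_eq_mul, mul_comm, Measure.real]
      -- done inner calc
    have hsup : g θ ≤ g θ - c * q := by
      apply csSup_le (hne θ hθ)
      rintro x ⟨t, ht, rfl⟩
      exact hbound t ht
    have hcq : c * q ≤ 0 := by linarith
    have hc : c ≤ 0 := by nlinarith
    simp only [hcdef] at hc
    linarith
  -- iterate
  have iter : ∀ θ > (0:ℝ), ∀ n : ℕ, g θ ≤ g (θ * r ^ n) := by
    intro θ hθ n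
    induction n with
    | zero => simp
    | succ n ih =>
        have h1 := key (θ * r ^ n) (by positivity)
        have h2 : θ * r ^ n * r = θ * r ^ (n + 1) := by ring
        rw [h2] at h1
        exact ih.trans h1
  -- conclude
  intro θ hθ
  have hgle : ∀ ε > (0:ℝ), g θ ≤ ε := by
    intro ε hε
    rw [Metric.tendsto_nhdsWithin_nhds] at hJ_lim
    obtain ⟨η, hη, hball⟩ := hJ_lim ε hε
    have htend : Tendsto (fun n : ℕ => θ * r ^ n) atTop (nhds 0) := by
      have := (tendsto_pow_atTop_nhds_zero_of_lt_one hr0.le hr1).const_mul θ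
      simpa using this
    obtain ⟨n, hn⟩ := (htend.eventually (gt_mem_nhds hη)).exists
    have hgn : g (θ * r ^ n) ≤ ε := by
      apply csSup_le (hne _ (by positivity))
      rintro x ⟨t, ht, rfl⟩
      have hd : dist t 0 < η := by
        rw [Real.dist_eq, sub_zero, abs_of_pos ht.1]
        exact lt_of_le_of_lt ht.2 hn
      have := hball ht.1 hd
      rw [Real.dist_eq, sub_zero] at this
      exact (le_abs_self _).trans this.le
    exact (iter θ hθ n).trans hgn
  have hg0 : g θ ≤ 0 := by
    by_contra h
    push_neg at h
    linarith [hgle (g θ / 2) (by linarith)]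
  have hJle : J θ ≤ 0 := (hle θ hθ θ ⟨hθ, le_refl θ⟩).trans hg0
  exact le_antisymm hJle (hJ_nonneg θ hθ)
end

section
/- Let (π_t)_{t≥0} be the semigroup of bounded kernels on (0,∞) defined by π_t f(x) = f(x−t) + ∫₀^t α(x−s) g'(x−s,1−) ⟨G, π_{t−s} f⟩ ds, and let V(x) = ∫₀^∞ α(x−s) g'(x−s,1−) e^{−α̃ s} ds, where ∫₀^∞ e^{−α̃ s} F(ds) = 1 with F(ds) = (∫_s^∞ α(x−s) g'(x−s,1−) G(dx)) ds. Then π_t V(x) = e^{α̃ t} V(x) for all t ≥ 0 and x ∈ (0,∞). -/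
/-!
Write `k = α g'`, `m(t) = ⟨G, π_t V⟩` and `ψ(t) = m(t) - e^{at}`. Splitting the integral defining
`V` at `s = t` gives `e^{at} V(x) = V(x - t) + ∫₀ᵗ k(x - s) e^{a(t - s)} ds`; subtracting this from
the renewal equation for `π_t V` leaves `π_t V(x) - e^{at} V(x) = ∫₀ᵗ k(x - s) ψ(t - s) ds`.
Integrating against `G` and using `⟨G, V⟩ = 1` yields `|ψ(t)| ≤ β ∫₀ᵗ |ψ|`, and iterating this
bound gives `|ψ(t)| ≤ M (βt)ⁿ / n!` for every `n`, so `ψ = 0` and the deviation vanishes.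
-/

open MeasureTheory Real Set Nat

section Gronwall

variable {ψ : ℝ → ℝ} {β M T : ℝ}

theorem abs_le_mul_pow_div_factorial_of_abs_le_integral (hβ : 0 ≤ β)
    (hψ : IntegrableOn ψ (Icc 0 T)) (hM : ∀ u ∈ Icc 0 T, |ψ u| ≤ M)
    (hle : ∀ u ∈ Icc 0 T, |ψ u| ≤ β * ∫ s in 0..u, |ψ s|) (n : ℕ) :
    ∀ u ∈ Icc 0 T, |ψ u| ≤ M * (β * u) ^ n / n ! := by
  induction n with
  | zero => simpa using hM
  | succ n ih =>
    intro u hu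
    have hsub : Icc 0 u ⊆ Icc 0 T := Icc_subset_Icc_right hu.2
    calc |ψ u| ≤ β * ∫ s in 0..u, |ψ s| := hle u hu
      _ ≤ β * ∫ s in 0..u, M * (β * s) ^ n / n ! := by
        gcongr
        refine intervalIntegral.integral_mono_on hu.1 ?_
          ((by fun_prop : Continuous _).intervalIntegrable _ _) fun s hs => ih s (hsub hs)
        exact (intervalIntegrable_iff_integrableOn_Icc_of_le hu.1).2 (hψ.mono_set hsub).abs
      _ = M * (β * u) ^ (n + 1) / (n + 1)! := by
        simp only [mul_pow, mul_div_assoc, intervalIntegral.integral_const_mul,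
          intervalIntegral.integral_div, integral_pow, factorial_succ]
        push_cast
        field_simp
        ring

theorem eq_zero_of_abs_le_mul_integral_abs (hβ : 0 ≤ β)
    (hψ : Measurable ψ) (hM : ∀ u ∈ Icc 0 T, |ψ u| ≤ M)
    (hle : ∀ u ∈ Icc 0 T, |ψ u| ≤ β * ∫ s in 0..u, |ψ s|) :
    ∀ u ∈ Icc 0 T, ψ u = 0 := by
  intro u hu
  have hψi : IntegrableOn ψ (Icc 0 T) :=
    Measure.integrableOn_of_bounded measure_Icc_lt_top.ne hψ.aestronglyMeasurable
      ((ae_restrict_iff' measurableSet_Icc).2 (ae_of_all _ hM))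
  have hlim := (FloorSemiring.tendsto_pow_div_factorial_atTop (β * u)).const_mul M
  rw [mul_zero] at hlim
  refine abs_nonpos_iff.1 (ge_of_tendsto' hlim fun n => ?_)
  rw [← mul_div_assoc]
  exact abs_le_mul_pow_div_factorial_of_abs_le_integral hβ hψi hM hle n u hu

end Gronwall

theorem abs_exp_mul_le {a u t : ℝ} (ha : 0 ≤ a) (hu : u ≤ t) : |exp (a * u)| ≤ exp (a * t) := by
  rw [abs_of_pos (exp_pos _)]
  exact exp_le_exp.2 (mul_le_mul_of_nonneg_left hu ha)

theorem abs_integral_le_of_abs_le {Ω : Type*} [MeasurableSpace Ω] {μ : Measure Ω}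
    [IsProbabilityMeasure μ] {f : Ω → ℝ} {C : ℝ} (hf : ∀ y, |f y| ≤ C) : |∫ y, f y ∂μ| ≤ C := by
  simpa using norm_integral_le_of_norm_le_const (μ := μ)
    (ae_of_all _ fun y => (norm_eq_abs _).trans_le (hf y))

theorem integrable_of_abs_le {Ω : Type*} [MeasurableSpace Ω] {μ : Measure Ω} [IsFiniteMeasure μ]
    {f : Ω → ℝ} {C : ℝ} (hf : Measurable f) (hC : ∀ y, |f y| ≤ C) : Integrable f μ :=
  .of_bound hf.aestronglyMeasurable C (ae_of_all _ fun y => (norm_eq_abs _).trans_le (hC y))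

theorem integral_sub_eq_integral_sub_mul {Ω : Type*} [MeasurableSpace Ω] {μ : Measure Ω}
    {f V : Ω → ℝ} (hf : Integrable f μ) (hV : Integrable V μ) (hV1 : ∫ y, V y ∂μ = 1) (c : ℝ) :
    ∫ y, f y ∂μ - c = ∫ y, (f y - c * V y) ∂μ := by
  rw [integral_sub hf (hV.const_mul c), integral_const_mul, hV1, mul_one]

noncomputable def discountedPast (k : ℝ → ℝ) (a x : ℝ) : ℝ :=
  ∫ s in Ioi 0, k (x - s) * exp (-(a * s))

section DiscountedPast

variable {k : ℝ → ℝ} {β a : ℝ}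

theorem measurable_discountedPast (hk : Measurable k) : Measurable (discountedPast k a) :=
  (((hk.comp (measurable_fst.sub measurable_snd)).mul
    (measurable_snd.const_mul a).neg.exp).stronglyMeasurable.integral_prod_right'
      (ν := volume.restrict (Ioi 0))).measurable

theorem integrableOn_exp_neg_mul_Ioi (ha : 0 < a) :
    IntegrableOn (fun s => exp (-(a * s))) (Ioi 0) := by
  simpa only [neg_mul] using exp_neg_integrableOn_Ioi 0 ha

theorem integrableOn_discountedPast_integrand (hk : Measurable k) (hkβ : ∀ u, |k u| ≤ β)
    (ha : 0 < a) (x : ℝ) : IntegrableOn (fun s => k (x - s) * exp (-(a * s))) (Ioi 0) := by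
  refine Integrable.bdd_mul (c := β) (integrableOn_exp_neg_mul_Ioi ha)
    (hk.comp (measurable_const.sub measurable_id)).aestronglyMeasurable
    (ae_of_all _ fun s => hkβ _)

theorem abs_discountedPast_le (hkβ : ∀ u, |k u| ≤ β) (ha : 0 < a) (x : ℝ) :
    |discountedPast k a x| ≤ β / a := by
  calc |discountedPast k a x| ≤ ∫ s in Ioi 0, β * exp (-(a * s)) := by
        rw [discountedPast, ← norm_eq_abs]
        refine norm_integral_le_of_norm_le ((integrableOn_exp_neg_mul_Ioi ha).const_mul β)
          (ae_of_all _ fun s => ?_)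
        rw [norm_mul, norm_of_nonneg (exp_pos _).le]
        exact mul_le_mul_of_nonneg_right (hkβ _) (exp_pos _).le
    _ = β / a := by
        simp only [integral_const_mul, ← neg_mul, integral_exp_mul_Ioi (neg_neg_of_pos ha),
          mul_zero, exp_zero]
        field_simp

theorem setIntegral_Ioi_comp_add (f : ℝ → ℝ) (t : ℝ) :
    ∫ s in Ioi t, f s = ∫ u in Ioi 0, f (u + t) := by
  rw [← (measurePreserving_add_right volume t).setIntegral_preimage_emb
    (measurableEmbedding_addRight t), preimage_add_const_Ioi, sub_self]

theorem exp_mul_discountedPast (hk : Measurable k) (hkβ : ∀ u, |k u| ≤ β) (ha : 0 < a)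
    {t : ℝ} (ht : 0 ≤ t) (x : ℝ) :
    exp (a * t) * discountedPast k a x =
      discountedPast k a (x - t) + ∫ s in Ioc 0 t, k (x - s) * exp (a * (t - s)) := by
  have hint := integrableOn_discountedPast_integrand hk hkβ ha x
  have hsplit : discountedPast k a x = (∫ s in Ioc 0 t, k (x - s) * exp (-(a * s))) +
      ∫ s in Ioi t, k (x - s) * exp (-(a * s)) := by
    rw [discountedPast, ← Ioc_union_Ioi_eq_Ioi ht, setIntegral_union Ioc_disjoint_Ioi_same
      measurableSet_Ioi (hint.mono_set Ioc_subset_Ioi_self) (hint.mono_set (Ioi_subset_Ioi ht))]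
  rw [hsplit, mul_add, add_comm, ← integral_const_mul, ← integral_const_mul,
    setIntegral_Ioi_comp_add, discountedPast]
  congr 1 <;> refine setIntegral_congr_fun (by measurability) fun s _ => ?_ <;>
    rw [mul_left_comm, ← exp_add] <;> ring_nf

end DiscountedPast

section Convolution

variable {k c : ℝ → ℝ} {β C t : ℝ}

theorem integrableOn_Ioc_mul_comp_sub (hk : Measurable k) (hkβ : ∀ u, |k u| ≤ β)
    (hc : Measurable c) (hC : ∀ u ∈ Icc 0 t, |c u| ≤ C) (x : ℝ) :
    IntegrableOn (fun s => k (x - s) * c (t - s)) (Ioc 0 t) := by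
  refine Measure.integrableOn_of_bounded (M := β * C) measure_Ioc_lt_top.ne
    (by fun_prop) ?_
  filter_upwards [ae_restrict_mem measurableSet_Ioc] with s hs
  rw [norm_mul, norm_eq_abs, norm_eq_abs]
  exact mul_le_mul (hkβ _) (hC _ ⟨by linarith [hs.2], by linarith [hs.1]⟩) (abs_nonneg _)
    ((abs_nonneg _).trans (hkβ 0))

theorem abs_setIntegral_Ioc_mul_comp_sub_le (hkβ : ∀ u, |k u| ≤ β)
    (hc : Measurable c) (hC : ∀ u ∈ Icc 0 t, |c u| ≤ C) (ht : 0 ≤ t) (x : ℝ) :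
    |∫ s in Ioc 0 t, k (x - s) * c (t - s)| ≤ β * ∫ s in 0..t, |c s| := by
  calc |∫ s in Ioc 0 t, k (x - s) * c (t - s)| ≤ ∫ s in Ioc 0 t, β * |c (t - s)| := by
        rw [← norm_eq_abs]
        refine norm_integral_le_of_norm_le (integrableOn_Ioc_mul_comp_sub (k := fun _ => β)
          measurable_const (fun _ => le_rfl) hc.abs (C := C) (by simpa using hC) x)
          (ae_of_all _ fun s => ?_)
        rw [norm_mul, norm_eq_abs]
        exact mul_le_mul_of_nonneg_right (hkβ _) (abs_nonneg _)
    _ = β * ∫ s in 0..t, |c s| := by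
        rw [integral_const_mul, ← intervalIntegral.integral_of_le ht,
          intervalIntegral.integral_comp_sub_left (fun s => |c s|), sub_self, sub_zero]

end Convolution

theorem sub_exp_mul_discountedPast_eq {k m : ℝ → ℝ} {β a C t p x : ℝ} (hk : Measurable k)
    (hkβ : ∀ u, |k u| ≤ β) (ha : 0 < a) (hm : Measurable m) (hmC : ∀ u ∈ Icc 0 t, |m u| ≤ C)
    (ht : 0 ≤ t) (hp : p = discountedPast k a (x - t) + ∫ s in Ioc 0 t, k (x - s) * m (t - s)) :
    p - exp (a * t) * discountedPast k a x =
      ∫ s in Ioc 0 t, k (x - s) * (m (t - s) - exp (a * (t - s))) := by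
  rw [hp, exp_mul_discountedPast hk hkβ ha ht x, add_sub_add_left_eq_sub,
    ← integral_sub (integrableOn_Ioc_mul_comp_sub hk hkβ hm hmC x)
      (integrableOn_Ioc_mul_comp_sub hk hkβ (by fun_prop)
        (fun u hu => abs_exp_mul_le ha.le hu.2) x)]
  simp only [← mul_sub]

theorem stmt9_general (G : Measure ℝ) [IsProbabilityMeasure G]
    (α g' : ℝ → ℝ) (hα_meas : Measurable α) (hg_meas : Measurable g')
    (hα_nonneg : ∀ x, 0 ≤ α x) (hg_nonneg : ∀ x, 0 ≤ g' x)
    (β : ℝ) (hβ : ∀ x, α x * g' x ≤ β)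
    (a : ℝ) (ha : 0 < a)
    (V : ℝ → ℝ)
    (hV : ∀ x, V x = ∫ s in Set.Ioi (0:ℝ), α (x - s) * g' (x - s) * Real.exp (-(a * s)))
    (hMalthus : ∫ x, V x ∂G = 1)
    (pk : ℝ → ℝ → ℝ)
    (hpk_meas : Measurable fun q : ℝ × ℝ => pk q.1 q.2)
    (hpk_bdd : ∀ T > (0:ℝ), ∃ C : ℝ, ∀ t ∈ Set.Icc (0:ℝ) T, ∀ x, |pk t x| ≤ C)
    (hpk_eq : ∀ t ≥ (0:ℝ), ∀ x, pk t x = V (x - t) +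
      ∫ s in Set.Ioc (0:ℝ) t, α (x - s) * g' (x - s) * ∫ y, pk (t - s) y ∂G) :
    ∀ t ≥ (0:ℝ), ∀ x, pk t x = Real.exp (a * t) * V x := by
  intro T hT x
  set k : ℝ → ℝ := fun u => α u * g' u
  have hk : Measurable k := hα_meas.mul hg_meas
  have hkβ : ∀ u, |k u| ≤ β := fun u =>
    (abs_of_nonneg (mul_nonneg (hα_nonneg u) (hg_nonneg u))).trans_le (hβ u)
  obtain rfl : V = discountedPast k a := funext hV
  set m : ℝ → ℝ := fun t => ∫ y, pk t y ∂G
  set ψ : ℝ → ℝ := fun t => m t - exp (a * t)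
  have hm : Measurable m := (hpk_meas.stronglyMeasurable.integral_prod_right' (ν := G)).measurable
  have hψ : Measurable ψ := hm.sub (by fun_prop)
  obtain ⟨C, hC⟩ := hpk_bdd (T + 1) (by linarith)
  have hpkC : ∀ u ∈ Icc 0 T, ∀ y, |pk u y| ≤ C := fun u hu => hC u ⟨hu.1, by linarith [hu.2]⟩
  have hmC : ∀ u ∈ Icc 0 T, |m u| ≤ C := fun u hu => abs_integral_le_of_abs_le (hpkC u hu)
  have hψC : ∀ u ∈ Icc 0 T, |ψ u| ≤ C + exp (a * T) := fun u hu =>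
    (abs_sub _ _).trans (add_le_add (hmC u hu) (abs_exp_mul_le ha.le hu.2))
  have hdev : ∀ u ∈ Icc 0 T, ∀ y, pk u y - exp (a * u) * discountedPast k a y =
      ∫ s in Ioc 0 u, k (y - s) * ψ (u - s) := fun u hu y =>
    sub_exp_mul_discountedPast_eq hk hkβ ha hm (fun v hv => hmC v ⟨hv.1, hv.2.trans hu.2⟩) hu.1
      (hpk_eq u hu.1 y)
  have hψ_le : ∀ u ∈ Icc 0 T, |ψ u| ≤ β * ∫ s in 0..u, |ψ s| := fun u hu => by
    rw [show ψ u = _ from integral_sub_eq_integral_sub_mul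
      (integrable_of_abs_le (f := pk u) (hpk_meas.comp measurable_prodMk_left) (hpkC u hu))
      (integrable_of_abs_le (measurable_discountedPast hk) (abs_discountedPast_le hkβ ha))
      hMalthus _]
    refine abs_integral_le_of_abs_le fun y => ?_
    rw [hdev u hu y]
    exact abs_setIntegral_Ioc_mul_comp_sub_le hkβ hψ (fun v hv => hψC v ⟨hv.1, hv.2.trans hu.2⟩)
      hu.1 y
  have hψ0 := eq_zero_of_abs_le_mul_integral_abs ((abs_nonneg _).trans (hkβ 0)) hψ hψC hψ_le
  rw [← sub_eq_zero, hdev T ⟨hT, le_rfl⟩ x]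
  exact setIntegral_eq_zero_of_forall_eq_zero fun s hs =>
    by rw [hψ0 (T - s) ⟨by linarith [hs.2], by linarith [hs.1]⟩, mul_zero]

/-- The function `V(x) = ∫₀^∞ α(x−s) g'(x−s,1−) e^{−α̃ s} ds` is an eigenfunction of the
mean semigroup `π_t f(x) = f(x−t) + ∫₀ᵗ α(x−s) g'(x−s,1−) ⟨G, pk_{t−s} f⟩ ds`:
`π_t V = e^{α̃ t} V`, given the Malthusian normalization `⟨G, V⟩ = 1`. -/
theorem stmt9 (G : Measure ℝ) [IsProbabilityMeasure G] (hG : G (Set.Iic 0) = 0)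
    (α g' : ℝ → ℝ) (hα_meas : Measurable α) (hg_meas : Measurable g')
    (hα_nonneg : ∀ x, 0 ≤ α x) (hg_nonneg : ∀ x, 0 ≤ g' x)
    (β : ℝ) (hβ : ∀ x, α x * g' x ≤ β)
    (hα_zero : ∀ u ≤ (0:ℝ), α u = 0) (hg_zero : ∀ u ≤ (0:ℝ), g' u = 0)
    (a : ℝ) (ha : 0 < a)
    (V : ℝ → ℝ)
    (hV : ∀ x, V x = ∫ s in Set.Ioi (0:ℝ), α (x - s) * g' (x - s) * Real.exp (-(a * s)))
    (hMalthus : ∫ x, V x ∂G = 1)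
    (pk : ℝ → ℝ → ℝ)
    (hpk_meas : Measurable fun q : ℝ × ℝ => pk q.1 q.2)
    (hpk_bdd : ∀ T > (0:ℝ), ∃ C : ℝ, ∀ t ∈ Set.Icc (0:ℝ) T, ∀ x, |pk t x| ≤ C)
    (hpk_eq : ∀ t ≥ (0:ℝ), ∀ x, pk t x = V (x - t) +
      ∫ s in Set.Ioc (0:ℝ) t, α (x - s) * g' (x - s) * ∫ y, pk (t - s) y ∂G) :
    ∀ t ≥ (0:ℝ), ∀ x, pk t x = Real.exp (a * t) * V x :=
  stmt9_general G α g' hα_meas hg_meas hα_nonneg hg_nonneg β hβ a ha V hV hMalthus pk hpk_meas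
    hpk_bdd hpk_eq
end
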